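/- Work in ℂ³ ⊗ ℂ³ and let ω = e^{2πi/3}. The linear span S_{P,1} of the Parthasarathy space S_P and the van der Monde vector z₁ has product index 3: the only one-dimensional subspaces of S_{P,1} spanned by product vectors are those spanned by z₁ = (|0⟩+|1⟩+|2⟩) ⊗ (|0⟩+|1⟩+|2⟩), by (|0⟩ − 2ω²|1⟩ + ω|2⟩) ⊗ (|0⟩ − 2ω|1⟩ + ω²|2⟩), and by (|0⟩ − 2ω|1⟩ + ω²|2⟩) ⊗ (|0⟩ − 2ω²|1⟩ + ω|2⟩). -/

import Mathlib

noncomputable section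

abbrev H3 : Type := EuclideanSpace ℂ (Fin 3)
abbrev H33 : Type := EuclideanSpace ℂ (Fin 3 × Fin 3)

/-- standard basis vector of ℂ³ -/
def ket3 (i : Fin 3) : H3 := EuclideanSpace.single i 1

/-- elementary tensor of two vectors of ℂ³, viewed in ℂ³ ⊗ ℂ³ ≅ ℂ⁹ -/
def tp (u v : H3) : H33 := WithLp.toLp 2 (fun p : Fin 3 × Fin 3 => u p.1 * v p.2)

/-- the set of one-dimensional subspaces of `T` spanned by (nonzero) product vectors -/
def prodLines (T : Submodule ℂ H33) : Set (Submodule ℂ H33) :=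
  {L | ∃ ξ : H33, ξ ≠ 0 ∧ ξ ∈ T ∧ (∃ u v : H3, ξ = tp u v) ∧ L = Submodule.span ℂ {ξ}}

/-- the vector |0⟩ + λ|1⟩ + λ²|2⟩ -/
def vand (lam : ℂ) : H3 := WithLp.toLp 2 (fun i : Fin 3 => lam ^ (i : ℕ))

/-- the van der Monde vector z_λ -/
def zv (lam : ℂ) : H33 := tp (vand lam) (vand lam)

/-- the van der Monde vector z_∞ = |2⟩ ⊗ |2⟩ -/
def zvinf : H33 := tp (ket3 2) (ket3 2)

/-- the span of all van der Monde vectors -/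
def FP : Submodule ℂ H33 := Submodule.span ℂ (insert zvinf (Set.range zv))

/-- the Parthasarathy completely entangled subspace of ℂ³ ⊗ ℂ³ -/
def SP33 : Submodule ℂ H33 := FPᗮ

/-- a primitive cube root of unity -/
def ω : ℂ := Complex.exp (2 * Real.pi * Complex.I / 3)

/-!
Identify x ∈ ℂ³ ⊗ ℂ³ with the polynomial `∑ x_{ij} t^(i+j)`. Then ⟪z_λ, x⟫ is its value at
conj λ, so S_P consists of the x whose polynomial vanishes, and S_P + ℂ z₁ of those whose
polynomial is a multiple of `(1 + t + t²)² = (t - ω)² (t - ω²)²`. For a product vector u ⊗ v the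
polynomial is `u(t) v(t)` with `u(t) = u₀ + u₁ t + u₂ t²`, and unique factorisation leaves three
possibilities for the pair of factors up to scalars: `(1 + t + t², 1 + t + t²)`,
`((t - ω)², (t - ω²)²)` and `((t - ω²)², (t - ω)²)`.
-/

open Polynomial ComplexConjugate

theorem Multiset.eq_pair_of_add_eq {α : Type*} {a b : α} {s t : Multiset α}
    (h : s + t = {a, a, b, b}) (hs : Multiset.card s = 2) :
    (s = {a, b} ∧ t = {a, b}) ∨ (s = {a, a} ∧ t = {b, b}) ∨ (s = {b, b} ∧ t = {a, a}) := by
  have hs := Multiset.mem_powersetCard.mpr ⟨h ▸ Multiset.le_add_right s t, hs⟩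
  simp [Multiset.insert_eq_cons, Multiset.powersetCard_cons, Multiset.powersetCard_one] at hs
  have cancel : ∀ t', s + t' = {a, a, b, b} → t = t' := fun t' h' =>
    add_left_cancel (h.trans h'.symm)
  rcases hs with rfl | rfl | rfl | rfl
  · exact .inl ⟨rfl, cancel _ (by simp [Multiset.insert_eq_cons])⟩
  · exact .inr (.inr ⟨rfl, cancel _ (by rw [add_comm]; rfl)⟩)
  · exact .inl ⟨rfl, cancel _ (by simp [Multiset.insert_eq_cons])⟩
  · exact .inr (.inl ⟨rfl, cancel _ rfl⟩)

theorem Polynomial.eq_C_mul_of_mul_eq_C_mul_sq {K : Type*} [Field K] [IsAlgClosed K]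
    {p q : K[X]} {a b c : K} (hp : p.natDegree ≤ 2) (hq : q.natDegree ≤ 2) (hc : c ≠ 0)
    (h : p * q = C c * ((X - C a) * (X - C b)) ^ 2) :
    ∃ k l : K, (p = C k * ((X - C a) * (X - C b)) ∧ q = C l * ((X - C a) * (X - C b))) ∨
      (p = C k * (X - C a) ^ 2 ∧ q = C l * (X - C b) ^ 2) ∨
      (p = C k * (X - C b) ^ 2 ∧ q = C l * (X - C a) ^ 2) := by
  have hab : (X - C a) * (X - C b) ≠ 0 := mul_ne_zero (X_sub_C_ne_zero a) (X_sub_C_ne_zero b)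
  have hpq : p * q ≠ 0 := h ▸ mul_ne_zero (C_ne_zero.mpr hc) (pow_ne_zero _ hab)
  have hroots : p.roots + q.roots = {a, a, b, b} := by
    rw [← roots_mul hpq, h, roots_C_mul _ hc, roots_pow, roots_mul hab, roots_X_sub_C,
      roots_X_sub_C, two_nsmul]
    simp [Multiset.insert_eq_cons]
  have hcard : Multiset.card p.roots = 2 := by
    have := congrArg Multiset.card hroots
    simp only [Multiset.card_add, IsAlgClosed.card_roots_eq_natDegree, Multiset.insert_eq_cons,
      Multiset.card_cons, Multiset.card_singleton] at this ⊢
    omega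
  have hp_eq := (C_leadingCoeff_mul_prod_multiset_X_sub_C (p := p)
    IsAlgClosed.card_roots_eq_natDegree).symm
  have hq_eq := (C_leadingCoeff_mul_prod_multiset_X_sub_C (p := q)
    IsAlgClosed.card_roots_eq_natDegree).symm
  refine ⟨p.leadingCoeff, q.leadingCoeff, ?_⟩
  rcases Multiset.eq_pair_of_add_eq hroots hcard with ⟨hs, ht⟩ | ⟨hs, ht⟩ | ⟨hs, ht⟩ <;>
    rw [hs] at hp_eq <;> rw [ht] at hq_eq <;>
    simp only [Multiset.insert_eq_cons, Multiset.map_cons, Multiset.map_singleton,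
      Multiset.prod_cons, Multiset.prod_singleton, ← sq] at hp_eq hq_eq
  exacts [.inl ⟨hp_eq, hq_eq⟩, .inr (.inl ⟨hp_eq, hq_eq⟩), .inr (.inr ⟨hp_eq, hq_eq⟩)]

theorem Submodule.mem_sup_span_singleton_iff {R M : Type*} [Ring R] [AddCommGroup M]
    [Module R M] {S : Submodule R M} {x z : M} : x ∈ S ⊔ R ∙ z ↔ ∃ c : R, x - c • z ∈ S := by
  simp only [Submodule.mem_sup, Submodule.mem_span_singleton]
  constructor
  · rintro ⟨y, hy, _, ⟨c, rfl⟩, rfl⟩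
    exact ⟨c, by simpa using hy⟩
  · rintro ⟨c, h⟩
    exact ⟨_, h, _, ⟨c, rfl⟩, sub_add_cancel x _⟩

theorem Submodule.eq_of_span_singleton_eq {K V : Type*} [Field K] [AddCommGroup V] [Module K V]
    (f : V →ₗ[K] K) {x y : V} (h : K ∙ x = K ∙ y) (hf : f x = f y) (hx : f x ≠ 0) : x = y := by
  obtain ⟨z, rfl⟩ := Submodule.span_singleton_eq_span_singleton.mp h
  rw [Units.smul_def, map_smul, smul_eq_mul, eq_comm, mul_eq_right₀ hx] at hf
  rw [Units.smul_def, hf, one_smul]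

lemma isPrimitiveRoot_ω : IsPrimitiveRoot ω 3 := by
  simpa [ω] using Complex.isPrimitiveRoot_exp 3 (by norm_num)

lemma ω_pow_three : ω ^ 3 = 1 := isPrimitiveRoot_ω.pow_eq_one

lemma C_ω_pow_three : (C ω : ℂ[X]) ^ 3 = 1 := by rw [← map_pow, ω_pow_three, C_1]

lemma ω_sq_add_ω_add_one : ω ^ 2 + ω + 1 = 0 := by
  have h := isPrimitiveRoot_ω.geom_sum_eq_zero (by norm_num)
  simp only [Finset.sum_range_succ, Finset.sum_range_zero] at h
  linear_combination h

def vecPoly : H3 →ₗ[ℂ] ℂ[X] where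
  toFun u := C (u 2) * X ^ 2 + C (u 1) * X + C (u 0)
  map_add' u v := by simp only [PiLp.add_apply, map_add]; ring
  map_smul' k u := by
    simp only [PiLp.smul_apply, smul_eq_mul, map_mul, RingHom.id_apply, smul_eq_C_mul]; ring

lemma vecPoly_apply (u : H3) : vecPoly u = C (u 2) * X ^ 2 + C (u 1) * X + C (u 0) := rfl

lemma natDegree_vecPoly_le (u : H3) : (vecPoly u).natDegree ≤ 2 := natDegree_quadratic_le

lemma vecPoly_injective : Function.Injective vecPoly := by
  intro u v h
  have hcoeff (n : ℕ) := congrArg (coeff · n) h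
  ext i
  fin_cases i
  · simpa [vecPoly_apply] using hcoeff 0
  · simpa [vecPoly_apply] using hcoeff 1
  · simpa [vecPoly_apply] using hcoeff 2

def tensorPoly : H33 →ₗ[ℂ] ℂ[X] where
  toFun x := ∑ p : Fin 3 × Fin 3, C (x p) * X ^ ((p.1 : ℕ) + p.2)
  map_add' x y := by simp only [PiLp.add_apply, map_add, add_mul, Finset.sum_add_distrib]
  map_smul' k x := by
    simp only [PiLp.smul_apply, smul_eq_mul, map_mul, RingHom.id_apply, smul_eq_C_mul,
      Finset.mul_sum, mul_assoc]

lemma tensorPoly_tp (u v : H3) : tensorPoly (tp u v) = vecPoly u * vecPoly v := by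
  simp only [tensorPoly, LinearMap.coe_mk, AddHom.coe_mk, tp, vecPoly_apply, Fintype.sum_prod_type,
    Fin.sum_univ_three, map_mul, Fin.val_zero, Fin.val_one, Fin.val_two]
  ring

lemma inner_zv (lam : ℂ) (x : H33) : inner ℂ (zv lam) x = (tensorPoly x).eval (conj lam) := by
  simp [tensorPoly, zv, tp, vand, PiLp.inner_apply, eval_finsetSum, pow_add]

lemma inner_zvinf (x : H33) : inner ℂ zvinf x = (tensorPoly x).coeff 4 := by
  simp [tensorPoly, zvinf, tp, ket3, PiLp.inner_apply, coeff_X_pow, Fintype.sum_prod_type,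
    Fin.sum_univ_three]

lemma mem_SP33_iff (x : H33) : x ∈ SP33 ↔ tensorPoly x = 0 := by
  rw [SP33, FP, ← Submodule.span_singleton_le_iff_mem, ← Submodule.isOrtho_iff_le,
    Submodule.isOrtho_comm, Submodule.isOrtho_span]
  simp only [Set.mem_insert_iff, Set.mem_range, Set.mem_singleton_iff, forall_eq,
    forall_eq_or_imp, forall_exists_index, forall_apply_eq_imp_iff, inner_zv, inner_zvinf]
  constructor
  · rintro ⟨-, h⟩
    exact Polynomial.funext fun μ => by simpa using h (conj μ)
  · intro h
    simp [h]

lemma mem_sup_span_zv_one_iff (x : H33) :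
    x ∈ SP33 ⊔ ℂ ∙ zv 1 ↔ ∃ c : ℂ, tensorPoly x = C c * tensorPoly (zv 1) := by
  simp only [Submodule.mem_sup_span_singleton_iff, mem_SP33_iff, map_sub, map_smul,
    smul_eq_C_mul, sub_eq_zero]

lemma vecPoly_vand_one : vecPoly (vand 1) = (X - C ω) * (X - C (ω ^ 2)) := by
  have h := congrArg C ω_sq_add_ω_add_one
  simp only [map_add, map_pow, map_one, map_zero] at h
  simp only [vand, one_pow, vecPoly_apply, map_one, one_mul, map_pow]
  linear_combination X * h - C_ω_pow_three

lemma tp_mem_sup_span_zv_one_iff (u v : H3) :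
    tp u v ∈ SP33 ⊔ ℂ ∙ zv 1 ↔
      ∃ c : ℂ, vecPoly u * vecPoly v = C c * ((X - C ω) * (X - C (ω ^ 2))) ^ 2 := by
  rw [mem_sup_span_zv_one_iff, zv, tensorPoly_tp, tensorPoly_tp, vecPoly_vand_one, ← sq]

lemma vecPoly_ket3 (a b : ℂ) :
    vecPoly (ket3 0 - a • ket3 1 + b • ket3 2) = C b * X ^ 2 - C a * X + 1 := by
  simp [vecPoly_apply, ket3]
  ring

lemma vecPoly_eq_C_ω_mul_sq :
    vecPoly (ket3 0 - (2 * ω ^ 2) • ket3 1 + ω • ket3 2) = C ω * (X - C ω) ^ 2 := by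
  rw [vecPoly_ket3, map_mul, map_pow, map_ofNat]
  linear_combination -C_ω_pow_three

lemma vecPoly_eq_C_ω_sq_mul_sq :
    vecPoly (ket3 0 - (2 * ω) • ket3 1 + ω ^ 2 • ket3 2) = C (ω ^ 2) * (X - C (ω ^ 2)) ^ 2 := by
  rw [vecPoly_ket3, map_mul, map_pow, map_ofNat]
  linear_combination (2 * C ω * X - C ω ^ 3 - 1) * C_ω_pow_three

lemma tp_zero_left (v : H3) : tp 0 v = 0 := by ext; simp [tp]

lemma tp_zero_right (u : H3) : tp u 0 = 0 := by ext; simp [tp]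

lemma tp_smul_smul (k l : ℂ) (u v : H3) : tp (k • u) (l • v) = (k * l) • tp u v := by
  ext; simp [tp]; ring

lemma span_tp_eq_of_vecPoly_eq {u v w w' : H3} {k l : ℂ} (h0 : tp u v ≠ 0)
    (hu : vecPoly u = C k * vecPoly w) (hv : vecPoly v = C l * vecPoly w') :
    ℂ ∙ tp u v = ℂ ∙ tp w w' := by
  rw [← smul_eq_C_mul, ← map_smul] at hu hv
  obtain rfl := vecPoly_injective hu
  obtain rfl := vecPoly_injective hv
  rw [tp_smul_smul] at h0 ⊢
  exact Submodule.span_singleton_smul_eq (left_ne_zero_of_smul h0).isUnit _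

local notation "ψ₊" => ket3 0 - (2 * ω ^ 2) • ket3 1 + ω • ket3 2
local notation "ψ₋" => ket3 0 - (2 * ω) • ket3 1 + ω ^ 2 • ket3 2

lemma span_tp_mem_of_tp_mem {u v : H3} (h0 : tp u v ≠ 0) (hT : tp u v ∈ SP33 ⊔ ℂ ∙ zv 1) :
    ℂ ∙ tp u v ∈ ({ℂ ∙ zv 1, ℂ ∙ tp ψ₊ ψ₋, ℂ ∙ tp ψ₋ ψ₊} : Set (Submodule ℂ H33)) := by
  obtain ⟨c, hc⟩ := (tp_mem_sup_span_zv_one_iff u v).mp hT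
  have hc0 : c ≠ 0 := by
    rintro rfl
    rw [C_0, zero_mul, mul_eq_zero, map_eq_zero_iff _ vecPoly_injective,
      map_eq_zero_iff _ vecPoly_injective] at hc
    rcases hc with rfl | rfl
    exacts [h0 (tp_zero_left v), h0 (tp_zero_right u)]
  obtain ⟨k, l, ⟨hu, hv⟩ | ⟨hu, hv⟩ | ⟨hu, hv⟩⟩ :=
    eq_C_mul_of_mul_eq_C_mul_sq (natDegree_vecPoly_le u) (natDegree_vecPoly_le v) hc0 hc
  · left
    rw [← vecPoly_vand_one] at hu hv
    exact span_tp_eq_of_vecPoly_eq h0 hu hv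
  · right; left
    refine span_tp_eq_of_vecPoly_eq (k := k * ω ^ 2) (l := l * ω) h0 ?_ ?_
    · rw [hu, vecPoly_eq_C_ω_mul_sq]
      simp only [map_mul, map_pow]
      linear_combination (-(C k * (X - C ω) ^ 2)) * C_ω_pow_three
    · rw [hv, vecPoly_eq_C_ω_sq_mul_sq]
      simp only [map_mul, map_pow]
      linear_combination (-(C l * (X - C ω ^ 2) ^ 2)) * C_ω_pow_three
  · right; right
    refine span_tp_eq_of_vecPoly_eq (k := k * ω) (l := l * ω ^ 2) h0 ?_ ?_
    · rw [hu, vecPoly_eq_C_ω_sq_mul_sq]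
      simp only [map_mul, map_pow]
      linear_combination (-(C k * (X - C ω ^ 2) ^ 2)) * C_ω_pow_three
    · rw [hv, vecPoly_eq_C_ω_mul_sq]
      simp only [map_mul, map_pow]
      linear_combination (-(C l * (X - C ω) ^ 2)) * C_ω_pow_three

lemma span_tp_mem_prodLines {u v : H3}
    (h : vecPoly u * vecPoly v = ((X - C ω) * (X - C (ω ^ 2))) ^ 2) :
    ℂ ∙ tp u v ∈ prodLines (SP33 ⊔ ℂ ∙ zv 1) := by
  refine ⟨tp u v, fun h0 => ?_, (tp_mem_sup_span_zv_one_iff u v).mpr ⟨1, by rw [h, C_1, one_mul]⟩,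
    ⟨u, v, rfl⟩, rfl⟩
  have := congrArg tensorPoly h0
  rw [tensorPoly_tp, h, map_zero] at this
  exact pow_ne_zero 2 (mul_ne_zero (X_sub_C_ne_zero _) (X_sub_C_ne_zero _)) this

lemma vecPoly_ψ_mul_vecPoly_ψ :
    vecPoly ψ₊ * vecPoly ψ₋ = ((X - C ω) * (X - C (ω ^ 2))) ^ 2 := by
  rw [vecPoly_eq_C_ω_mul_sq, vecPoly_eq_C_ω_sq_mul_sq]
  simp only [map_pow]
  linear_combination ((X - C ω) * (X - C ω ^ 2)) ^ 2 * C_ω_pow_three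

lemma prodLines_sup_span_zv_one :
    prodLines (SP33 ⊔ ℂ ∙ zv 1) = {ℂ ∙ zv 1, ℂ ∙ tp ψ₊ ψ₋, ℂ ∙ tp ψ₋ ψ₊} := by
  ext L
  constructor
  · rintro ⟨_, h0, hT, ⟨u, v, rfl⟩, rfl⟩
    exact span_tp_mem_of_tp_mem h0 hT
  · rintro (rfl | rfl | rfl)
    · exact span_tp_mem_prodLines (u := vand 1) (v := vand 1) (by rw [vecPoly_vand_one, ← sq])
    · exact span_tp_mem_prodLines vecPoly_ψ_mul_vecPoly_ψ
    · exact span_tp_mem_prodLines ((mul_comm _ _).trans vecPoly_ψ_mul_vecPoly_ψ)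

lemma ncard_three_lines :
    ({ℂ ∙ zv 1, ℂ ∙ tp ψ₊ ψ₋, ℂ ∙ tp ψ₋ ψ₊} : Set (Submodule ℂ H33)).ncard = 3 := by
  refine Set.ncard_eq_three.mpr ⟨_, _, _, ?_, ?_, ?_, rfl⟩
  all_goals
    intro h
    have h01 := congrArg (· (0, 1)) (Submodule.eq_of_span_singleton_eq
      (EuclideanSpace.projₗ (0, 0)) h (by simp [zv, tp, vand, ket3]) (by simp [zv, tp, vand, ket3]))
    simp [zv, tp, vand, ket3] at h01
  · have : (3 : ℂ) = 0 := by
      linear_combination 4 * ω_sq_add_ω_add_one - (2 * ω + 1) * h01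
    norm_num at this
  · have : (3 : ℂ) = 0 := by
      linear_combination (2 - 4 * ω) * ω_sq_add_ω_add_one + (2 * ω + 1) * h01
    norm_num at this
  · have : (3 : ℂ) = 0 := by
      linear_combination (3 - 2 * ω) * ω_sq_add_ω_add_one - (2 * ω + 1) * h01
    norm_num at this

theorem statement13 :
    prodLines (SP33 ⊔ Submodule.span ℂ {zv 1}) =
      {Submodule.span ℂ {zv 1},
       Submodule.span ℂ
         {tp (ket3 0 - (2 * ω ^ 2) • ket3 1 + ω • ket3 2)
             (ket3 0 - (2 * ω) • ket3 1 + ω ^ 2 • ket3 2)},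
       Submodule.span ℂ
         {tp (ket3 0 - (2 * ω) • ket3 1 + ω ^ 2 • ket3 2)
             (ket3 0 - (2 * ω ^ 2) • ket3 1 + ω • ket3 2)}} ∧
    (prodLines (SP33 ⊔ Submodule.span ℂ {zv 1})).ncard = 3 := by
  rw [prodLines_sup_span_zv_one]
  exact ⟨rfl, ncard_three_lines⟩
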